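/- arXiv:2210.14175 — 10 statements merged into one kernel-verified Lean document; each statement's English description precedes it below -/
import Mathlib

section
/- Let ℰ, ℱ, 𝒢, ℒ, ℳ₁, ℳ₂, 𝒩 ∈ ℝ with ℰ > 0 and ℰ𝒢 − ℱ² > 0. Let 𝒦₁, 𝒦₂ ∈ ℂ be the two roots (with multiplicity) of (ℰ𝒢 − ℱ²)k² + [−ℒ𝒢 − ℰ𝒩 + ℱ(ℳ₁+ℳ₂)]k + ℒ𝒩 − ((ℳ₁+ℳ₂)/2)² = 0, and let ρ₁, ρ₂ ∈ ℂ be the two roots (with multiplicity) of (ℰ𝒢 − ℱ²)ρ² + (ℱℳ₂ − 𝒩ℰ + ℱℳ₁ − 𝒢ℒ)ρ − ℳ₂ℳ₁ + 𝒩ℒ = 0. Then (1) ρ₁ + ρ₂ = 𝒦₁ + 𝒦₂, (2) (𝒦₁ − 𝒦₂)² − (ρ₁ − ρ₂)² = (ℳ₁ − ℳ₂)²/(ℰ𝒢 − ℱ²), and consequently (3) {ρ₁, ρ₂} = {𝒦₁, 𝒦₂} as multisets if and only if ℳ₁ = ℳ₂. -/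
/-- relations between the Kummer principal curvatures `𝒦₁, 𝒦₂`
(roots of the limit-point quadratic) and the focal coordinates `ρ₁, ρ₂`
(roots of the focal-point quadratic), and the characterization of normality. -/
theorem stmt_2 (E F G L M₁ M₂ N : ℝ) (hE : 0 < E) (hEG : 0 < E * G - F ^ 2)
    (K₁ K₂ ρ₁ ρ₂ : ℂ)
    (hK : ∀ z : ℂ,
      ((E * G - F ^ 2 : ℝ) : ℂ) * z ^ 2
        + ((-(L * G) - E * N + F * (M₁ + M₂) : ℝ) : ℂ) * z
        + ((L * N - ((M₁ + M₂) / 2) ^ 2 : ℝ) : ℂ)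
      = ((E * G - F ^ 2 : ℝ) : ℂ) * (z - K₁) * (z - K₂))
    (hρ : ∀ z : ℂ,
      ((E * G - F ^ 2 : ℝ) : ℂ) * z ^ 2
        + ((F * M₂ - N * E + F * M₁ - G * L : ℝ) : ℂ) * z
        + ((-(M₂ * M₁) + N * L : ℝ) : ℂ)
      = ((E * G - F ^ 2 : ℝ) : ℂ) * (z - ρ₁) * (z - ρ₂)) :
    ρ₁ + ρ₂ = K₁ + K₂ ∧
    (K₁ - K₂) ^ 2 - (ρ₁ - ρ₂) ^ 2 = (((M₁ - M₂) ^ 2 / (E * G - F ^ 2) : ℝ) : ℂ) ∧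
    (({ρ₁, ρ₂} : Multiset ℂ) = ({K₁, K₂} : Multiset ℂ) ↔ M₁ = M₂) := by
  have hDr : (E * G - F ^ 2) ≠ 0 := ne_of_gt hEG
  have hD : ((E : ℂ) * G - (F : ℂ) ^ 2) ≠ 0 := by
    intro h
    apply hDr
    exact_mod_cast h
  have hK' := hK
  have hρ' := hρ
  push_cast at hK' hρ'
  -- Vieta relations
  have hKs : ((E : ℂ) * G - (F : ℂ) ^ 2) * (K₁ + K₂)
      = (L : ℂ) * G + (E : ℂ) * N - (F : ℂ) * (M₁ + M₂) := by
    linear_combination hK' 1 - hK' 0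
  have hKp : ((E : ℂ) * G - (F : ℂ) ^ 2) * (K₁ * K₂)
      = (L : ℂ) * N - (((M₁ : ℂ) + M₂) / 2) ^ 2 := by
    linear_combination -hK' 0
  have hρs : ((E : ℂ) * G - (F : ℂ) ^ 2) * (ρ₁ + ρ₂)
      = (L : ℂ) * G + (E : ℂ) * N - (F : ℂ) * (M₁ + M₂) := by
    linear_combination hρ' 1 - hρ' 0
  have hρp : ((E : ℂ) * G - (F : ℂ) ^ 2) * (ρ₁ * ρ₂)
      = -((M₂ : ℂ) * M₁) + (N : ℂ) * L := by
    linear_combination -hρ' 0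
  have hsum : ρ₁ + ρ₂ = K₁ + K₂ :=
    mul_left_cancel₀ hD (hρs.trans hKs.symm)
  have h2 : (K₁ - K₂) ^ 2 - (ρ₁ - ρ₂) ^ 2
      = (((M₁ - M₂) ^ 2 / (E * G - F ^ 2) : ℝ) : ℂ) := by
    push_cast
    rw [eq_div_iff hD]
    linear_combination (-(K₁ + K₂ + ρ₁ + ρ₂)) * ((E : ℂ) * G - (F : ℂ) ^ 2) * hsum
      + 4 * hρp - 4 * hKp
  refine ⟨hsum, h2, ?_, ?_⟩
  · intro hm
    have hsq : (K₁ - K₂) ^ 2 = (ρ₁ - ρ₂) ^ 2 := by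
      have h12 : ρ₁ = K₁ ∧ ρ₂ = K₂ ∨ ρ₁ = K₂ ∧ ρ₂ = K₁ := by
        rw [Multiset.insert_eq_cons, Multiset.insert_eq_cons,
          Multiset.cons_eq_cons] at hm
        rcases hm with ⟨h1, h2⟩ | ⟨_, cs, h1, h2⟩
        · exact Or.inl ⟨h1, by simpa using h2⟩
        · rw [Multiset.singleton_eq_cons_iff] at h1 h2
          exact Or.inr ⟨h2.1.symm, h1.1⟩
      rcases h12 with ⟨ha, hb⟩ | ⟨ha, hb⟩ <;> rw [ha, hb] <;> ring
    have h0 : (((M₁ - M₂) ^ 2 / (E * G - F ^ 2) : ℝ) : ℂ) = 0 := by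
      rw [← h2, hsq]; ring
    have hr : (M₁ - M₂) ^ 2 / (E * G - F ^ 2) = 0 := by exact_mod_cast h0
    have hsq0 : (M₁ - M₂) ^ 2 = 0 := by
      field_simp at hr
      nlinarith [hr]
    nlinarith [hsq0]
  · intro hm
    subst hm
    have hz : (K₁ - ρ₁) * (K₁ - ρ₂) = 0 := by
      have h' : ((E : ℂ) * G - (F : ℂ) ^ 2) * ((K₁ - ρ₁) * (K₁ - ρ₂)) = 0 := by
        linear_combination hK' K₁ - hρ' K₁
      exact (mul_eq_zero.mp h').resolve_left hD
    rcases mul_eq_zero.mp hz with h1 | h1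
    · have e1 : ρ₁ = K₁ := by linear_combination -h1
      have e2 : ρ₂ = K₂ := by
        have h := hsum; rw [e1] at h; linear_combination h
      rw [e1, e2]
    · have e1 : ρ₂ = K₁ := by linear_combination -h1
      have e2 : ρ₁ = K₂ := by
        have h := hsum; rw [e1] at h; linear_combination h
      rw [e1, e2, Multiset.pair_comm]
end

section
/- Let Ω be a real 3×2 matrix with linearly independent columns, X a real 3×2 matrix, and Δ an invertible real 2×2 matrix. Set 𝓘_Ω = ΩᵀΩ, 𝓘𝓘_Ω = −ΩᵀX, 𝓘 = Δ·𝓘_Ω·Δᵀ and 𝓘𝓘 = Δ·𝓘𝓘_Ω. Then for every b ∈ ℝ²∖{0}, writing a = (Δᵀ)⁻¹·b, one has aᵀ𝓘a ≠ 0, bᵀ𝓘_Ωb ≠ 0, and det(Δ) · (aᵀ·𝓘𝓘·a)/(aᵀ·𝓘·a) = (bᵀ·𝓘𝓘_Ω·adj(Δᵀ)·b)/(bᵀ·𝓘_Ω·b), where adj denotes the adjugate matrix. -/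
/-!
Since `Δᵀ a = b`, the form `aᵀ (Δ 𝓘_Ω Δᵀ) a` is `bᵀ 𝓘_Ω b`, which is nonzero because `Ω` is
injective, and `aᵀ (Δ 𝓘𝓘_Ω) a = bᵀ 𝓘𝓘_Ω a`; multiplying by `det Δ` replaces `a` by
`adj(Δᵀ) Δᵀ a = adj(Δᵀ) b`.
-/

open Matrix

namespace Matrix

variable {m n R : Type*} [Fintype m] [Fintype n]

theorem dotProduct_mul_mul_transpose_mulVec [CommSemiring R] (A : Matrix n m R)
    (M : Matrix m m R) (a : n → R) :
    a ⬝ᵥ (A * M * Aᵀ) *ᵥ a = (Aᵀ *ᵥ a) ⬝ᵥ M *ᵥ (Aᵀ *ᵥ a) := by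
  rw [← mulVec_mulVec, ← mulVec_mulVec, dotProduct_mulVec, ← mulVec_transpose]

theorem dotProduct_mul_mulVec [CommSemiring R] (A : Matrix n m R) (M : Matrix m n R)
    (a : n → R) :
    a ⬝ᵥ (A * M) *ᵥ a = (Aᵀ *ᵥ a) ⬝ᵥ M *ᵥ a := by
  rw [← mulVec_mulVec, dotProduct_mulVec, ← mulVec_transpose]

theorem adjugate_mulVec_mulVec [DecidableEq n] [CommRing R] (A : Matrix n n R) (v : n → R) :
    A.adjugate *ᵥ (A *ᵥ v) = A.det • v := by
  rw [mulVec_mulVec, adjugate_mul, smul_mulVec, one_mulVec]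

theorem dotProduct_transpose_mul_self_mulVec_ne_zero [CommRing R] [LinearOrder R]
    [IsStrictOrderedRing R] (A : Matrix m n R) (hA : LinearIndependent R A.col) {v : n → R}
    (hv : v ≠ 0) :
    v ⬝ᵥ (Aᵀ * A) *ᵥ v ≠ 0 := by
  have hAv : A *ᵥ v ≠ 0 := ((mulVec_injective_iff.mpr hA).ne_iff' (mulVec_zero A)).mpr hv
  rw [dotProduct_mul_mulVec, transpose_transpose]
  exact dotProduct_self_eq_zero.not.mpr hAv

end Matrix

theorem stmt_4_general (Ω : Matrix (Fin 3) (Fin 2) ℝ)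
    (hΩ : LinearIndependent ℝ (fun j : Fin 2 => fun i : Fin 3 => Ω i j))
    (Δ : Matrix (Fin 2) (Fin 2) ℝ)
    (hΔ : IsUnit Δ.det)
    (IΩ IIΩ Im IIm : Matrix (Fin 2) (Fin 2) ℝ)
    (hIΩ : IΩ = Ωᵀ * Ω)
    (hIm : Im = Δ * IΩ * Δᵀ) (hIIm : IIm = Δ * IIΩ)
    (b : Fin 2 → ℝ) (hb : b ≠ 0) (a : Fin 2 → ℝ) (ha : a = (Δᵀ)⁻¹.mulVec b) :
    a ⬝ᵥ Im.mulVec a ≠ 0 ∧ b ⬝ᵥ IΩ.mulVec b ≠ 0 ∧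
    Δ.det * ((a ⬝ᵥ IIm.mulVec a) / (a ⬝ᵥ Im.mulVec a)) =
      (b ⬝ᵥ (IIΩ * (Δᵀ).adjugate).mulVec b) / (b ⬝ᵥ IΩ.mulVec b) := by
  have hba : Δᵀ *ᵥ a = b := by
    rw [ha, mulVec_mulVec, mul_nonsing_inv _ (by rwa [det_transpose]), one_mulVec]
  have hIm_eq : a ⬝ᵥ Im *ᵥ a = b ⬝ᵥ IΩ *ᵥ b := by
    rw [hIm, dotProduct_mul_mul_transpose_mulVec, hba]
  have hIΩ_ne : b ⬝ᵥ IΩ *ᵥ b ≠ 0 :=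
    hIΩ ▸ dotProduct_transpose_mul_self_mulVec_ne_zero Ω hΩ hb
  have hIIm_eq : Δ.det * (a ⬝ᵥ IIm *ᵥ a) = b ⬝ᵥ (IIΩ * Δᵀ.adjugate) *ᵥ b := by
    rw [hIIm, dotProduct_mul_mulVec, hba, ← mulVec_mulVec, ← hba, adjugate_mulVec_mulVec,
      det_transpose, mulVec_smul, dotProduct_smul, smul_eq_mul]
  refine ⟨hIm_eq ▸ hIΩ_ne, hIΩ_ne, ?_⟩
  rw [hIm_eq, mul_div_assoc', hIIm_eq]

/-- at a nonsingular point, `δ_Ω · 𝒦_q(a) = 𝒦_q^Ω(b)` under the change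
of coordinates `a = (Δᵀ)⁻¹ b`. -/
theorem stmt_4 (Ω : Matrix (Fin 3) (Fin 2) ℝ)
    (hΩ : LinearIndependent ℝ (fun j : Fin 2 => fun i : Fin 3 => Ω i j))
    (X : Matrix (Fin 3) (Fin 2) ℝ) (Δ : Matrix (Fin 2) (Fin 2) ℝ)
    (hΔ : IsUnit Δ.det)
    (IΩ IIΩ Im IIm : Matrix (Fin 2) (Fin 2) ℝ)
    (hIΩ : IΩ = Ωᵀ * Ω) (hIIΩ : IIΩ = -(Ωᵀ * X))
    (hIm : Im = Δ * IΩ * Δᵀ) (hIIm : IIm = Δ * IIΩ)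
    (b : Fin 2 → ℝ) (hb : b ≠ 0) (a : Fin 2 → ℝ) (ha : a = (Δᵀ)⁻¹.mulVec b) :
    a ⬝ᵥ Im.mulVec a ≠ 0 ∧ b ⬝ᵥ IΩ.mulVec b ≠ 0 ∧
    Δ.det * ((a ⬝ᵥ IIm.mulVec a) / (a ⬝ᵥ Im.mulVec a)) =
      (b ⬝ᵥ (IIΩ * (Δᵀ).adjugate).mulVec b) / (b ⬝ᵥ IΩ.mulVec b) :=
  stmt_4_general Ω hΩ Δ hΔ IΩ IIΩ Im IIm hIΩ hIm hIIm b hb a ha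
end

section
/- Let E, F, G, L, M₁, M₂, N and δ₁₁, δ₁₂, δ₂₁, δ₂₂ be real numbers such that the matrix S = [[E, F], [F, G]] is positive definite. Set A = [[L, M₁], [M₂, N]]·adj(Δᵀ) where Δ = [[δ₁₁, δ₁₂], [δ₂₁, δ₂₂]], and define 𝒦(b) = (bᵀAb)/(bᵀSb) on ℝ²∖{0}. Put 𝓜 = δ₁₁M₁ − δ₂₁L + δ₂₂M₂ − δ₁₂N, C₁ = 2F(δ₂₂L − δ₁₂M₁) − E𝓜, C₂ = 2G(δ₂₂L − δ₁₂M₁) − 2E(δ₁₁N − δ₂₁M₂), and C₃ = G𝓜 − 2F(δ₁₁N − δ₂₁M₂). Then b = (b₁, b₂) ≠ 0 is a critical point of 𝒦 if and only if C₁b₁² + C₂b₁b₂ + C₃b₂² = 0. -/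
/-!
`𝒦 = p / q` is a quotient of two quadratic forms, so its differential at `b` vanishes exactly
when `q(b) ∇p(b) = p(b) ∇q(b)`. By Euler's relation `b ⬝ᵥ ∇p(b) = 2 p(b)` this vector is
orthogonal to `b`; in the plane it is therefore `½ det (∇p(b), ∇q(b))` times `b` turned by a right
angle. For the Kummer forms, `det (∇p(b), ∇q(b))` is twice `C₁b₁² + C₂b₁b₂ + C₃b₂²`.
-/

open Matrix

variable {𝕜 n : Type*} [NontriviallyNormedField 𝕜] [Fintype n]

theorem Matrix.differentiable_dotProduct_mulVec_self (M : Matrix n n 𝕜) :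
    Differentiable 𝕜 fun y : n → 𝕜 => y ⬝ᵥ M *ᵥ y := by
  simp only [dotProduct, mulVec]
  fun_prop

theorem Matrix.hasLineDerivAt_dotProduct_mulVec_self (M : Matrix n n 𝕜) (x v : n → 𝕜) :
    HasLineDerivAt 𝕜 (fun y : n → 𝕜 => y ⬝ᵥ M *ᵥ y) (v ⬝ᵥ M *ᵥ x + x ⬝ᵥ M *ᵥ v) x v := by
  have h := ((hasDerivAt_id (0 : 𝕜)).smul_const (v ⬝ᵥ M *ᵥ x + x ⬝ᵥ M *ᵥ v)).add
    (((hasDerivAt_id (0 : 𝕜)).mul (hasDerivAt_id (0 : 𝕜))).smul_const (v ⬝ᵥ M *ᵥ v))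
  unfold HasLineDerivAt
  convert h.const_add (x ⬝ᵥ M *ᵥ x) using 1
  · ext t
    simp only [mulVec_add, mulVec_smul, add_dotProduct, dotProduct_add, smul_dotProduct,
      dotProduct_smul, id, smul_eq_mul, Pi.add_apply, Pi.mul_apply]
    ring
  · simp

theorem Matrix.fderiv_dotProduct_mulVec_div_apply (A S : Matrix n n 𝕜) {x : n → 𝕜}
    (hx : x ⬝ᵥ S *ᵥ x ≠ 0) (v : n → 𝕜) :
    fderiv 𝕜 (fun y : n → 𝕜 => (y ⬝ᵥ A *ᵥ y) / (y ⬝ᵥ S *ᵥ y)) x v =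
      v ⬝ᵥ ((x ⬝ᵥ S *ᵥ x) • ((A + Aᵀ) *ᵥ x) - (x ⬝ᵥ A *ᵥ x) • ((S + Sᵀ) *ᵥ x)) /
        (x ⬝ᵥ S *ᵥ x) ^ 2 := by
  have hdiff : DifferentiableAt 𝕜 (fun y : n → 𝕜 => (y ⬝ᵥ A *ᵥ y) / (y ⬝ᵥ S *ᵥ y)) x := by
    simp only [div_eq_mul_inv]
    exact (A.differentiable_dotProduct_mulVec_self x).mul
      ((S.differentiable_dotProduct_mulVec_self x).fun_inv hx)
  rw [← hdiff.lineDeriv_eq_fderiv]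
  have h := (A.hasLineDerivAt_dotProduct_mulVec_self x v).fun_div
    (S.hasLineDerivAt_dotProduct_mulVec_self x v) (by simpa using hx)
  refine HasLineDerivAt.lineDeriv (h.congr_deriv ?_)
  simp only [zero_smul, add_zero, add_mulVec, dotProduct_add, dotProduct_sub, dotProduct_smul,
    smul_eq_mul, dotProduct_transpose_mulVec]
  ring

theorem Matrix.fderiv_dotProduct_mulVec_div_eq_zero_iff (A S : Matrix n n 𝕜) {x : n → 𝕜}
    (hx : x ⬝ᵥ S *ᵥ x ≠ 0) :
    fderiv 𝕜 (fun y : n → 𝕜 => (y ⬝ᵥ A *ᵥ y) / (y ⬝ᵥ S *ᵥ y)) x = 0 ↔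
      (x ⬝ᵥ S *ᵥ x) • ((A + Aᵀ) *ᵥ x) = (x ⬝ᵥ A *ᵥ x) • ((S + Sᵀ) *ᵥ x) := by
  rw [← sub_eq_zero (a := (x ⬝ᵥ S *ᵥ x) • ((A + Aᵀ) *ᵥ x)), ← dotProduct_eq_zero_iff,
    ContinuousLinearMap.ext_iff]
  simp only [fderiv_dotProduct_mulVec_div_apply A S hx, _root_.zero_apply,
    div_eq_zero_iff, pow_ne_zero 2 hx, or_false, dotProduct_comm]

theorem Matrix.vec2_swap_neg_ne_zero {R : Type*} [AddGroup R] {b : Fin 2 → R} (hb : b ≠ 0) :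
    ![b 1, -b 0] ≠ 0 := by
  intro h
  apply hb
  ext i
  fin_cases i
  · simpa using congrFun h 1
  · simpa using congrFun h 0

theorem Matrix.two_smul_quotient_gradient_fin_two {R : Type*} [CommRing R]
    (A S : Matrix (Fin 2) (Fin 2) R) (x : Fin 2 → R) :
    (2 : R) • ((x ⬝ᵥ S *ᵥ x) • ((A + Aᵀ) *ᵥ x) - (x ⬝ᵥ A *ᵥ x) • ((S + Sᵀ) *ᵥ x)) =
      (of ![(A + Aᵀ) *ᵥ x, (S + Sᵀ) *ᵥ x]).det • ![x 1, -x 0] := by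
  ext i
  fin_cases i <;>
  · simp only [vec2_dotProduct, mulVec, Matrix.add_apply, transpose_apply, Pi.smul_apply,
      Pi.sub_apply, smul_eq_mul, det_fin_two, of_apply, cons_val_zero, cons_val_one, Fin.zero_eta,
      Fin.mk_one]
    ring

theorem Matrix.fderiv_dotProduct_mulVec_div_eq_zero_iff_det_fin_two [NeZero (2 : 𝕜)]
    (A S : Matrix (Fin 2) (Fin 2) 𝕜) {x : Fin 2 → 𝕜} (hx₀ : x ≠ 0) (hx : x ⬝ᵥ S *ᵥ x ≠ 0) :
    fderiv 𝕜 (fun y : Fin 2 → 𝕜 => (y ⬝ᵥ A *ᵥ y) / (y ⬝ᵥ S *ᵥ y)) x = 0 ↔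
      (of ![(A + Aᵀ) *ᵥ x, (S + Sᵀ) *ᵥ x]).det = 0 := by
  rw [fderiv_dotProduct_mulVec_div_eq_zero_iff A S hx, ← sub_eq_zero,
    ← smul_right_inj (two_ne_zero (α := 𝕜)), smul_zero, two_smul_quotient_gradient_fin_two,
    smul_eq_zero, or_iff_left (vec2_swap_neg_ne_zero hx₀)]

/-- the critical points of the Ω-Kummer curvature function are
exactly the solutions of the equation of principal surfaces
`C₁b₁² + C₂b₁b₂ + C₃b₂² = 0`. -/
theorem stmt_7 (E F G L M₁ M₂ N δ₁₁ δ₁₂ δ₂₁ δ₂₂ : ℝ)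
    (hS : (!![E, F; F, G]).PosDef)
    (Δ A : Matrix (Fin 2) (Fin 2) ℝ)
    (hΔ : Δ = !![δ₁₁, δ₁₂; δ₂₁, δ₂₂])
    (hA : A = !![L, M₁; M₂, N] * (Δᵀ).adjugate)
    (𝒦 : (Fin 2 → ℝ) → ℝ)
    (h𝒦 : ∀ b, 𝒦 b = (b ⬝ᵥ A.mulVec b) / (b ⬝ᵥ (!![E, F; F, G]).mulVec b))
    (𝓜 C₁ C₂ C₃ : ℝ)
    (h𝓜 : 𝓜 = δ₁₁ * M₁ - δ₂₁ * L + δ₂₂ * M₂ - δ₁₂ * N)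
    (hC₁ : C₁ = 2 * F * (δ₂₂ * L - δ₁₂ * M₁) - E * 𝓜)
    (hC₂ : C₂ = 2 * G * (δ₂₂ * L - δ₁₂ * M₁) - 2 * E * (δ₁₁ * N - δ₂₁ * M₂))
    (hC₃ : C₃ = G * 𝓜 - 2 * F * (δ₁₁ * N - δ₂₁ * M₂))
    (b : Fin 2 → ℝ) (hb : b ≠ 0) :
    fderiv ℝ 𝒦 b = 0 ↔
      C₁ * (b 0) ^ 2 + C₂ * (b 0) * (b 1) + C₃ * (b 1) ^ 2 = 0 := by
  have hq : b ⬝ᵥ !![E, F; F, G] *ᵥ b ≠ 0 := (hS.dotProduct_mulVec_pos hb).ne'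
  have hdet : (of ![(A + Aᵀ) *ᵥ b, (!![E, F; F, G] + !![E, F; F, G]ᵀ) *ᵥ b]).det =
      2 * (C₁ * (b 0) ^ 2 + C₂ * (b 0) * (b 1) + C₃ * (b 1) ^ 2) := by
    rw [hA, hΔ, hC₁, hC₂, hC₃, h𝓜, ← adjugate_transpose, adjugate_fin_two_of]
    simp only [mul_apply, Fin.sum_univ_two, mulVec_fin_two, Matrix.add_apply, transpose_apply,
      of_apply, cons_val_zero, cons_val_one, det_fin_two]
    ring
  rw [funext h𝒦, fderiv_dotProduct_mulVec_div_eq_zero_iff_det_fin_two _ _ hb hq, hdet,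
    mul_eq_zero, or_iff_right two_ne_zero]
end

section
/- Let 𝓘_Ω be a symmetric positive definite real 2×2 matrix, and let Δ, 𝓘𝓘_Ω be real 2×2 matrices such that 𝓘𝓘_Ω·adj(Δᵀ) is symmetric (the normality condition). Define 𝒦(b) = (bᵀ·𝓘𝓘_Ω·adj(Δᵀ)·b)/(bᵀ·𝓘_Ω·b) on ℝ²∖{0}, and let P = [[0, 1], [−1, 0]]. Then for every u ∈ ℝ² with b := Δᵀ·u ≠ 0, b is a critical point of 𝒦 if and only if uᵀ·Δ·P·adj(𝓘𝓘_Ω)ᵀ·Δ·𝓘_Ω·Δᵀ·u = 0. -/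
/-!
Since `𝓘_Ω` and the normality matrix `A = 𝓘𝓘_Ω·adj(Δᵀ)` are symmetric, the Rayleigh quotient
`𝒦(b) = bᵀAb / bᵀ𝓘_Ωb` is critical at `b` exactly when `Ab` and `𝓘_Ωb` are parallel, i.e. when
the planar cross product `(Ab)ᵀ P (𝓘_Ωb)` vanishes. For `2 × 2` matrices `Mᵀ P = P adj M`, which
moves `P` past `adj(𝓘𝓘_Ω)ᵀ` and `Δ` and turns `uᵀΔ P adj(𝓘𝓘_Ω)ᵀ Δ 𝓘_Ω Δᵀu` into `bᵀ A P 𝓘_Ω b`.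
-/

open Matrix

section Quotient

variable {E : Type*} [NormedAddCommGroup E] [NormedSpace ℝ E] {f g : E → ℝ} {f' g' : E →L[ℝ] ℝ}
  {x : E}

theorem HasFDerivAt.fun_div (hf : HasFDerivAt f f' x) (hg : HasFDerivAt g g' x) (hx : g x ≠ 0) :
    HasFDerivAt (fun y => f y / g y) ((g x ^ 2)⁻¹ • (g x • f' - f x • g')) x := by
  refine (hf.mul ((hasFDerivAt_inv hx).comp x hg)).congr_fderiv ?_
  ext h
  simp [field, neg_add_eq_sub]

theorem fderiv_div_eq_zero_iff (hf : HasFDerivAt f f' x) (hg : HasFDerivAt g g' x)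
    (hx : g x ≠ 0) :
    fderiv ℝ (fun y => f y / g y) x = 0 ↔ g x • f' = f x • g' := by
  rw [(hf.fun_div hg hx).fderiv, smul_eq_zero, sub_eq_zero]
  simp [hx]

end Quotient

section RayleighQuotient

variable {n : Type*} [Fintype n]

theorem dotProductBilin_toContinuousBilinearMap_injective :
    Function.Injective ((dotProductBilin ℝ ℝ).toContinuousBilinearMap : (n → ℝ) → _) := by
  classical
  intro v w h
  ext i
  simpa using congr($h (Pi.single i 1))

theorem hasFDerivAt_dotProduct_mulVec (M : Matrix n n ℝ) (b : n → ℝ) :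
    HasFDerivAt (fun x => x ⬝ᵥ M *ᵥ x)
      ((dotProductBilin ℝ ℝ).toContinuousBilinearMap ((M + Mᵀ) *ᵥ b)) b := by
  let B := ((dotProductBilin ℝ ℝ).compl₂ M.mulVecLin).toContinuousBilinearMap
  refine (B.hasFDerivAt_of_bilinear (hasFDerivAt_id b) (hasFDerivAt_id b)).congr_fderiv ?_
  ext h
  change b ⬝ᵥ M *ᵥ h + h ⬝ᵥ M *ᵥ b = ((M + Mᵀ) *ᵥ b) ⬝ᵥ h
  rw [add_mulVec, add_dotProduct, mulVec_transpose, dotProduct_mulVec, dotProduct_comm (M *ᵥ b),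
    add_comm]

theorem Matrix.IsSymm.hasFDerivAt_dotProduct_mulVec {M : Matrix n n ℝ} (hM : M.IsSymm) (b : n → ℝ) :
    HasFDerivAt (fun x => x ⬝ᵥ M *ᵥ x)
      ((2 : ℝ) • (dotProductBilin ℝ ℝ).toContinuousBilinearMap (M *ᵥ b)) b := by
  convert _root_.hasFDerivAt_dotProduct_mulVec M b using 1
  rw [hM.eq, ← two_smul ℝ M, smul_mulVec, map_smul]

theorem fderiv_rayleigh_eq_zero_iff {A G : Matrix n n ℝ} (hA : A.IsSymm) (hG : G.IsSymm)
    {b : n → ℝ} (hb : b ⬝ᵥ G *ᵥ b ≠ 0) :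
    fderiv ℝ (fun x => (x ⬝ᵥ A *ᵥ x) / (x ⬝ᵥ G *ᵥ x)) b = 0 ↔
      (b ⬝ᵥ G *ᵥ b) • A *ᵥ b = (b ⬝ᵥ A *ᵥ b) • G *ᵥ b := by
  rw [fderiv_div_eq_zero_iff (hA.hasFDerivAt_dotProduct_mulVec b)
    (hG.hasFDerivAt_dotProduct_mulVec b) hb, smul_comm _ (2 : ℝ), smul_comm _ (2 : ℝ),
    smul_right_inj two_ne_zero, ← map_smul, ← map_smul,
    dotProductBilin_toContinuousBilinearMap_injective.eq_iff]

end RayleighQuotient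

section TwoByTwo

variable {R : Type*} [CommRing R]

theorem mul_rot_eq_rot_mul_adjugate_transpose (M : Matrix (Fin 2) (Fin 2) R) :
    M * !![0, 1; -1, 0] = !![0, 1; -1, 0] * M.adjugateᵀ := by
  rw [adjugate_transpose, adjugate_fin_two, eta_fin_two M]
  simp

theorem adjugate_transpose_mul_rot (M : Matrix (Fin 2) (Fin 2) R) :
    Mᵀ.adjugate * !![0, 1; -1, 0] = !![0, 1; -1, 0] * M := by
  rw [adjugate_fin_two, eta_fin_two M]
  simp

theorem dotProduct_mulVec_mul_mul_transpose {m k : Type*} [Fintype m] [Fintype k]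
    (M : Matrix m k R) (N : Matrix k k R) (u : m → R) :
    u ⬝ᵥ (M * N * Mᵀ) *ᵥ u = (Mᵀ *ᵥ u) ⬝ᵥ N *ᵥ (Mᵀ *ᵥ u) := by
  rw [← mulVec_mulVec, ← mulVec_mulVec, dotProduct_mulVec, mulVec_transpose]

theorem dotProduct_mulVec_rot_adjugate_transpose (Δ II G : Matrix (Fin 2) (Fin 2) R)
    (u : Fin 2 → R) :
    u ⬝ᵥ (Δ * !![0, 1; -1, 0] * II.adjugateᵀ * Δ * G * Δᵀ) *ᵥ u =
      ((II * Δᵀ.adjugate)ᵀ *ᵥ (Δᵀ *ᵥ u)) ⬝ᵥ !![0, 1; -1, 0] *ᵥ G *ᵥ (Δᵀ *ᵥ u) := by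
  have hrot : !![0, 1; -1, 0] * II.adjugateᵀ * Δ = II * Δᵀ.adjugate * !![0, 1; -1, 0] := by
    rw [← mul_rot_eq_rot_mul_adjugate_transpose, Matrix.mul_assoc, Matrix.mul_assoc,
      adjugate_transpose_mul_rot]
  rw [mulVec_transpose, ← dotProduct_mulVec, mulVec_mulVec, mulVec_mulVec, ← hrot,
    ← dotProduct_mulVec_mul_mul_transpose]
  simp only [Matrix.mul_assoc]

end TwoByTwo

theorem smul_eq_smul_iff_dotProduct_rot_mulVec_eq_zero {K : Type*} [Field K]
    {b v w : Fin 2 → K} (hb : b ⬝ᵥ w ≠ 0) :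
    (b ⬝ᵥ w) • v = (b ⬝ᵥ v) • w ↔ v ⬝ᵥ !![0, 1; -1, 0] *ᵥ w = 0 := by
  have hcross : v ⬝ᵥ !![0, 1; -1, 0] *ᵥ w = v 0 * w 1 - v 1 * w 0 := by
    simp [dotProduct, Fin.sum_univ_two, sub_eq_add_neg]
  rw [hcross, funext_iff, Fin.forall_fin_two]
  simp only [Pi.smul_apply, smul_eq_mul, dotProduct, Fin.sum_univ_two] at hb ⊢
  constructor
  · rintro ⟨h0, h1⟩
    refine (mul_eq_zero.mp ?_).resolve_left hb
    linear_combination w 1 * h0 - w 0 * h1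
  · intro h
    constructor
    · linear_combination b 1 * h
    · linear_combination -b 0 * h

/-- for a normal congruence (`𝓘𝓘_Ω·adj(Δᵀ)` symmetric), `b = Δᵀu ≠ 0`
is a critical point of the Ω-Kummer curvature function iff
`uᵀ·Δ·P·adj(𝓘𝓘_Ω)ᵀ·Δ·𝓘_Ω·Δᵀ·u = 0`. -/
theorem stmt_8 (IΩ Δ IIΩ : Matrix (Fin 2) (Fin 2) ℝ) (hpos : IΩ.PosDef)
    (hsym : (IIΩ * (Δᵀ).adjugate).IsSymm)
    (𝒦 : (Fin 2 → ℝ) → ℝ)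
    (h𝒦 : ∀ b, 𝒦 b = (b ⬝ᵥ (IIΩ * (Δᵀ).adjugate).mulVec b) / (b ⬝ᵥ IΩ.mulVec b))
    (P : Matrix (Fin 2) (Fin 2) ℝ) (hP : P = !![0, 1; -1, 0])
    (u b : Fin 2 → ℝ) (hbdef : b = Δᵀ.mulVec u) (hb : b ≠ 0) :
    fderiv ℝ 𝒦 b = 0 ↔
      u ⬝ᵥ (Δ * P * (IIΩ.adjugate)ᵀ * Δ * IΩ * Δᵀ).mulVec u = 0 := by
  subst hP hbdef
  have hIΩ : IΩ.IsSymm := isHermitian_iff_isSymm.mp hpos.isHermitian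
  have hb_pos : 0 < Δᵀ *ᵥ u ⬝ᵥ IΩ *ᵥ (Δᵀ *ᵥ u) := hpos.dotProduct_mulVec_pos hb
  rw [funext h𝒦, fderiv_rayleigh_eq_zero_iff hsym hIΩ hb_pos.ne',
    smul_eq_smul_iff_dotProduct_rot_mulVec_eq_zero hb_pos.ne',
    dotProduct_mulVec_rot_adjugate_transpose, hsym.eq]
end

section
/- Let U ⊆ ℝ² be open, x : U → ℝ³ smooth, and Ω = (w₁ w₂) : U → M_{3×2}(ℝ) smooth with w₁(q), w₂(q) linearly independent for every q. Let ξ := (w₁ × w₂)/‖w₁ × w₂‖ : U → S², and suppose ξ is a frontal with Dξ = Ω·Δ_Ωᵀ for a smooth Δ_Ω : U → M₂(ℝ). Set 𝓘_Ω = ΩᵀΩ, 𝓘𝓘_Ω = −ΩᵀDx, and P = [[0,1],[−1,0]]. Then for a smooth curve α : I → U, α(t) = (u₁(t), u₂(t)), the surface of the congruence Y(t,v) = x(α(t)) + v·ξ(α(t)) is developable — that is, det[(x∘α)'(t), (ξ∘α)'(t), ξ(α(t))] = 0 for all t ∈ I — if and only if (u₁'(t), u₂'(t))·P·adj(𝓘𝓘_Ω)·𝓘_Ω·Δ_Ωᵀ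 (evaluated at α(t))·(u₁'(t), u₂'(t))ᵀ = 0 for all t ∈ I. -/
/-!
By the chain rule, along `α` the three vectors of the triple product are `Dx u'`, `Ω Δᵀ u'` and a
positive multiple of `w₁ × w₂`. Lagrange's identity turns `det[a, b, w₁ × w₂]` into the `2 × 2`
determinant `det[Ωᵀ a, Ωᵀ b] = det[-𝓘𝓘_Ω u', 𝓘_Ω Δᵀ u']`, and for `2 × 2` matrices
`det[A u, B u] = uᵀ Aᵀ P B u = uᵀ P adj(A) B u`.
-/

open Matrix

/-- The triple product `det[a, b, c]` of three vectors of `ℝ³`. -/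
noncomputable def tripleProduct (a b c : EuclideanSpace ℝ (Fin 3)) : ℝ :=
  (Matrix.of ![(fun i => a i), (fun i => b i), (fun i => c i)]).det

theorem det_cross_eq_det_transpose_mulVec {R : Type*} [CommRing R] (a b : Fin 3 → R)
    (M : Matrix (Fin 3) (Fin 2) R) :
    (of ![a, b, (fun i => M i 0) ⨯₃ (fun i => M i 1)]).det = (of ![Mᵀ *ᵥ a, Mᵀ *ᵥ b]).det := by
  change det ![a, b, _] = _
  rw [← triple_product_eq_det, triple_product_permutation, triple_product_permutation,
    cross_dot_cross, det_fin_two]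
  simp [mulVec, dotProduct_comm, mul_comm]

theorem det_mulVec_mulVec_fin_two {R : Type*} [CommRing R] (A B : Matrix (Fin 2) (Fin 2) R)
    (u : Fin 2 → R) :
    (of ![A *ᵥ u, B *ᵥ u]).det = u ⬝ᵥ (!![0, 1; -1, 0] * A.adjugate * B) *ᵥ u := by
  simp [det_fin_two, adjugate_fin_two, mulVec, dotProduct, Fin.sum_univ_two, Matrix.mul_apply]
  ring

theorem adjugate_neg_fin_two {R : Type*} [CommRing R] (A : Matrix (Fin 2) (Fin 2) R) :
    (-A).adjugate = -A.adjugate := by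
  rw [← neg_one_smul R A, adjugate_smul]
  simp

theorem tripleProduct_toLp_smul_right (a b c : Fin 3 → ℝ) (r : ℝ) :
    tripleProduct (WithLp.toLp 2 a) (WithLp.toLp 2 b) (r • WithLp.toLp 2 c) =
      r * (of ![a, b, c]).det := by
  simp only [tripleProduct, PiLp.smul_apply, smul_eq_mul, det_fin_three, of_apply, cons_val',
    cons_val_fin_one, cons_val_zero, cons_val_one, cons_val]
  ring

theorem cross_cols_ne_zero {K : Type*} [Field K] (M : Matrix (Fin 3) (Fin 2) K)
    (hM : LinearIndependent K fun j i => M i j) :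
    (fun i => M i 0) ⨯₃ (fun i => M i 1) ≠ 0 := by
  have hcols : ![fun i => M i 0, fun i => M i 1] = fun j i => M i j := by
    ext j
    fin_cases j <;> rfl
  rwa [crossProduct_ne_zero_iff_linearIndependent, hcols]

theorem det_mulVec_cross_eq_neg_dotProduct (Ω Dx : Matrix (Fin 3) (Fin 2) ℝ)
    (Δ : Matrix (Fin 2) (Fin 2) ℝ) (u : Fin 2 → ℝ) :
    (of ![Dx *ᵥ u, (Ω * Δᵀ) *ᵥ u, (fun i => Ω i 0) ⨯₃ (fun i => Ω i 1)]).det =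
      -(u ⬝ᵥ (!![0, 1; -1, 0] * (-(Ωᵀ * Dx)).adjugate * (Ωᵀ * Ω) * Δᵀ) *ᵥ u) := by
  rw [det_cross_eq_det_transpose_mulVec, mulVec_mulVec, mulVec_mulVec, ← Matrix.mul_assoc,
    det_mulVec_mulVec_fin_two, adjugate_neg_fin_two]
  simp only [Matrix.mul_neg, Matrix.neg_mul, neg_mulVec, dotProduct_neg, neg_neg, Matrix.mul_assoc]

theorem ContinuousLinearMap.apply_eq_fst_smul_add_snd_smul {E : Type*} [NormedAddCommGroup E]
    [NormedSpace ℝ E] (L : ℝ × ℝ →L[ℝ] E) (v : ℝ × ℝ) :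
    L v = v.1 • L (1, 0) + v.2 • L (0, 1) := by
  rw [← map_smul, ← map_smul, ← map_add]
  simp

theorem deriv_comp_eq_mulVec {n : ℕ} {f : ℝ × ℝ → EuclideanSpace ℝ (Fin n)} {α : ℝ → ℝ × ℝ}
    {t : ℝ} {M : Matrix (Fin n) (Fin 2) ℝ} (hf : DifferentiableAt ℝ f (α t))
    (hα : DifferentiableAt ℝ α t)
    (hM : ∀ i, fderiv ℝ f (α t) (1, 0) i = M i 0 ∧ fderiv ℝ f (α t) (0, 1) i = M i 1) :
    deriv (f ∘ α) t = WithLp.toLp 2 (M *ᵥ ![(deriv α t).1, (deriv α t).2]) := by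
  rw [(hf.hasFDerivAt.comp_hasDerivAt t hα.hasDerivAt).deriv,
    ContinuousLinearMap.apply_eq_fst_smul_add_snd_smul]
  ext i
  simp [(hM i).1, (hM i).2, mulVec, dotProduct, Fin.sum_univ_two, mul_comm]

theorem DifferentiableAt.cross {E : Type*} [NormedAddCommGroup E] [NormedSpace ℝ E]
    {v w : E → Fin 3 → ℝ} {q : E} (hv : DifferentiableAt ℝ v q) (hw : DifferentiableAt ℝ w q) :
    DifferentiableAt ℝ (fun p => v p ⨯₃ w p) q := by
  rw [differentiableAt_pi] at hv hw ⊢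
  intro i
  fin_cases i <;>
    simp only [cross_apply, Fin.reduceFinMk, Fin.zero_eta, Fin.mk_one, cons_val] <;> fun_prop

theorem DifferentiableAt.inv_norm_smul {E F : Type*} [NormedAddCommGroup E] [NormedSpace ℝ E]
    [NormedAddCommGroup F] [InnerProductSpace ℝ F] {c : E → F} {q : E}
    (hc : DifferentiableAt ℝ c q) (h0 : c q ≠ 0) :
    DifferentiableAt ℝ (fun p => ‖c p‖⁻¹ • c p) q :=
  ((hc.norm ℝ h0).inv (norm_ne_zero_iff.mpr h0)).smul hc

theorem stmt_10_general (U : Set (ℝ × ℝ)) (hU : IsOpen U)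
    (x : ℝ × ℝ → EuclideanSpace ℝ (Fin 3)) (hx : ContDiffOn ℝ (⊤ : ℕ∞) x U)
    (Ω : ℝ × ℝ → Matrix (Fin 3) (Fin 2) ℝ)
    (hΩsmooth : ∀ i j, ContDiffOn ℝ (⊤ : ℕ∞) (fun q => Ω q i j) U)
    (hΩli : ∀ q ∈ U, LinearIndependent ℝ (fun j : Fin 2 => fun i : Fin 3 => Ω q i j))
    (ξ : ℝ × ℝ → EuclideanSpace ℝ (Fin 3))
    (hξdef : ∀ q ∈ U, ξ q =
      ‖(EuclideanSpace.equiv (Fin 3) ℝ).symm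
          (crossProduct (fun i => Ω q i 0) (fun i => Ω q i 1))‖⁻¹ •
        (EuclideanSpace.equiv (Fin 3) ℝ).symm
          (crossProduct (fun i => Ω q i 0) (fun i => Ω q i 1)))
    (Δ : ℝ × ℝ → Matrix (Fin 2) (Fin 2) ℝ)
    (hfrontal : ∀ q ∈ U, ∀ i,
      fderiv ℝ ξ q (1, 0) i = (Ω q * (Δ q)ᵀ) i 0 ∧
      fderiv ℝ ξ q (0, 1) i = (Ω q * (Δ q)ᵀ) i 1)
    (Dx : ℝ × ℝ → Matrix (Fin 3) (Fin 2) ℝ)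
    (hDx : ∀ q i, Dx q i 0 = fderiv ℝ x q (1, 0) i ∧ Dx q i 1 = fderiv ℝ x q (0, 1) i)
    (IΩ IIΩ : ℝ × ℝ → Matrix (Fin 2) (Fin 2) ℝ)
    (hIΩ : ∀ q, IΩ q = (Ω q)ᵀ * Ω q) (hIIΩ : ∀ q, IIΩ q = -((Ω q)ᵀ * Dx q))
    (P : Matrix (Fin 2) (Fin 2) ℝ) (hP : P = !![0, 1; -1, 0])
    (I : Set ℝ) (hI : IsOpen I)
    (α : ℝ → ℝ × ℝ) (hα : ContDiffOn ℝ (⊤ : ℕ∞) α I) (hmaps : Set.MapsTo α I U) :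
    (∀ t ∈ I, tripleProduct (deriv (x ∘ α) t) (deriv (ξ ∘ α) t) (ξ (α t)) = 0) ↔
    (∀ t ∈ I, ![(deriv α t).1, (deriv α t).2] ⬝ᵥ
        (P * (IIΩ (α t)).adjugate * IΩ (α t) * (Δ (α t))ᵀ).mulVec
          ![(deriv α t).1, (deriv α t).2] = 0) := by
  refine forall₂_congr fun t ht => ?_
  set q := α t
  have hq : q ∈ U := hmaps ht
  have hαt : DifferentiableAt ℝ α t :=
    (hα.contDiffAt (hI.mem_nhds ht)).differentiableAt (by simp)
  have hxq : DifferentiableAt ℝ x q :=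
    (hx.contDiffAt (hU.mem_nhds hq)).differentiableAt (by simp)
  have hΩq (j : Fin 2) : DifferentiableAt ℝ (fun p i => Ω p i j) q :=
    differentiableAt_pi.mpr fun i =>
      ((hΩsmooth i j).contDiffAt (hU.mem_nhds hq)).differentiableAt (by simp)
  have hcross := cross_cols_ne_zero (Ω q) (hΩli q hq)
  have hξq : DifferentiableAt ℝ ξ q := by
    refine (DifferentiableAt.inv_norm_smul
      ((EuclideanSpace.equiv (Fin 3) ℝ).symm.differentiableAt.comp q
        ((hΩq 0).cross (hΩq 1))) ?_).congr_of_eventuallyEq ?_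
    · simpa using hcross
    · filter_upwards [hU.mem_nhds hq] with p hp
      exact hξdef p hp
  rw [deriv_comp_eq_mulVec hxq hαt fun i => ⟨(hDx q i).1.symm, (hDx q i).2.symm⟩,
    deriv_comp_eq_mulVec hξq hαt (hfrontal q hq), hξdef q hq, hP, hIΩ, hIIΩ]
  simp only [PiLp.continuousLinearEquiv_symm_apply]
  rw [tripleProduct_toLp_smul_right, det_mulVec_cross_eq_neg_dotProduct]
  simp only [mul_eq_zero, inv_eq_zero, norm_eq_zero, WithLp.toLp_eq_zero, hcross, neg_eq_zero,
    false_or]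

/-- a surface of the congruence is developable iff the curve satisfies
the equation of developable surfaces `u'ᵀ·P·adj(𝓘𝓘_Ω)·𝓘_Ω·Δ_Ωᵀ·u' = 0`. -/
theorem stmt_10 (U : Set (ℝ × ℝ)) (hU : IsOpen U)
    (x : ℝ × ℝ → EuclideanSpace ℝ (Fin 3)) (hx : ContDiffOn ℝ (⊤ : ℕ∞) x U)
    (Ω : ℝ × ℝ → Matrix (Fin 3) (Fin 2) ℝ)
    (hΩsmooth : ∀ i j, ContDiffOn ℝ (⊤ : ℕ∞) (fun q => Ω q i j) U)
    (hΩli : ∀ q ∈ U, LinearIndependent ℝ (fun j : Fin 2 => fun i : Fin 3 => Ω q i j))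
    (ξ : ℝ × ℝ → EuclideanSpace ℝ (Fin 3))
    (hξdef : ∀ q ∈ U, ξ q =
      ‖(EuclideanSpace.equiv (Fin 3) ℝ).symm
          (crossProduct (fun i => Ω q i 0) (fun i => Ω q i 1))‖⁻¹ •
        (EuclideanSpace.equiv (Fin 3) ℝ).symm
          (crossProduct (fun i => Ω q i 0) (fun i => Ω q i 1)))
    (Δ : ℝ × ℝ → Matrix (Fin 2) (Fin 2) ℝ)
    (hΔsmooth : ∀ i j, ContDiffOn ℝ (⊤ : ℕ∞) (fun q => Δ q i j) U)
    (hfrontal : ∀ q ∈ U, ∀ i,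
      fderiv ℝ ξ q (1, 0) i = (Ω q * (Δ q)ᵀ) i 0 ∧
      fderiv ℝ ξ q (0, 1) i = (Ω q * (Δ q)ᵀ) i 1)
    (Dx : ℝ × ℝ → Matrix (Fin 3) (Fin 2) ℝ)
    (hDx : ∀ q i, Dx q i 0 = fderiv ℝ x q (1, 0) i ∧ Dx q i 1 = fderiv ℝ x q (0, 1) i)
    (IΩ IIΩ : ℝ × ℝ → Matrix (Fin 2) (Fin 2) ℝ)
    (hIΩ : ∀ q, IΩ q = (Ω q)ᵀ * Ω q) (hIIΩ : ∀ q, IIΩ q = -((Ω q)ᵀ * Dx q))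
    (P : Matrix (Fin 2) (Fin 2) ℝ) (hP : P = !![0, 1; -1, 0])
    (I : Set ℝ) (hI : IsOpen I) (hIc : I.OrdConnected)
    (α : ℝ → ℝ × ℝ) (hα : ContDiffOn ℝ (⊤ : ℕ∞) α I) (hmaps : Set.MapsTo α I U) :
    (∀ t ∈ I, tripleProduct (deriv (x ∘ α) t) (deriv (ξ ∘ α) t) (ξ (α t)) = 0) ↔
    (∀ t ∈ I, ![(deriv α t).1, (deriv α t).2] ⬝ᵥ
        (P * (IIΩ (α t)).adjugate * IΩ (α t) * (Δ (α t))ᵀ).mulVec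
          ![(deriv α t).1, (deriv α t).2] = 0) :=
  stmt_10_general U hU x hx Ω hΩsmooth hΩli ξ hξdef Δ hfrontal Dx hDx IΩ IIΩ hIΩ hIIΩ P hP I hI α hα
    hmaps
end

section
/- Let Δ, 𝓘_Ω, 𝓘𝓘_Ω be real 2×2 matrices, P = [[0, 1], [−1, 0]], and suppose 𝓘𝓘_Ω·adj(Δᵀ) is symmetric. Then Δ·P·adj(𝓘𝓘_Ω)ᵀ·Δ·𝓘_Ω·Δᵀ = det(Δ) · P·adj(𝓘𝓘_Ω)·𝓘_Ω·Δᵀ, where adj denotes the adjugate. -/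
open Matrix

/-- main theorem, pointwise form: if `𝓘𝓘_Ω·adj(Δᵀ)` is symmetric
(normality), then `Δ·P·adj(𝓘𝓘_Ω)ᵀ·Δ·𝓘_Ω·Δᵀ = det(Δ) • (P·adj(𝓘𝓘_Ω)·𝓘_Ω·Δᵀ)`. -/
theorem stmt_11 (Δ IΩ IIΩ P : Matrix (Fin 2) (Fin 2) ℝ)
    (hP : P = !![0, 1; -1, 0])
    (hsym : (IIΩ * (Δᵀ).adjugate).IsSymm) :
    Δ * P * (IIΩ.adjugate)ᵀ * Δ * IΩ * Δᵀ =
      Δ.det • (P * IIΩ.adjugate * IΩ * Δᵀ) := by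
  set a := Δ 0 0; set b := Δ 0 1; set c := Δ 1 0; set d := Δ 1 1
  set e := IΩ 0 0; set f := IΩ 0 1; set g := IΩ 1 0; set h := IΩ 1 1
  set p := IIΩ 0 0; set q := IIΩ 0 1; set r := IIΩ 1 0; set s := IIΩ 1 1
  have key : q * a - p * c = r * d - s * b := by
    have := congrFun (congrFun hsym 0) 1
    simp only [Matrix.IsSymm, Matrix.transpose_apply, Matrix.mul_apply,
      Matrix.adjugate_fin_two, Fin.sum_univ_two, Matrix.transpose_apply,
      Matrix.of_apply, Matrix.cons_val', Matrix.cons_val_zero, Matrix.cons_val_one,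
      Matrix.head_cons, Matrix.head_fin_const, Matrix.empty_val',
      Matrix.cons_val_fin_one] at this
    linarith [this]
  ext i j
  fin_cases i <;> fin_cases j <;>
    simp [hP, Matrix.mul_apply, Fin.sum_univ_two, Matrix.adjugate_fin_two,
      Matrix.det_fin_two, Matrix.vecMul, Matrix.vecHead, Matrix.vecTail,
      dotProduct, Matrix.transpose_apply]
  · linear_combination (-(a*b*f) - a*b*g - a^2*e - b^2*h) * key
  · linear_combination (-(a*c*e) - a*d*f - b*c*g - b*d*h) * key
  · linear_combination (-(a*c*e) - a*d*g - b*c*f - b*d*h) * key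
  · linear_combination (-(c*d*f) - c*d*g - c^2*e - d^2*h) * key
end

section
/- Let U ⊆ ℝ² be open, and let Δ, 𝓘_Ω, 𝓘𝓘_Ω : U → M₂(ℝ) be real-analytic maps such that 𝓘𝓘_Ω(q)·adj(Δ(q)ᵀ) is symmetric for all q ∈ U (normal congruence data). Let I ⊆ ℝ be an open interval and γ : I → U a real-analytic curve satisfying γ'(t)ᵀ·[Δ·P·adj(𝓘𝓘_Ω)ᵀ·Δ·𝓘_Ω·Δᵀ](γ(t))·γ'(t) = 0 for all t ∈ I (an analytic solution of the equation of principal surfaces), where P = [[0,1],[−1,0]]. Then either det Δ(γ(t)) = 0 for all t ∈ I, or γ'(t)ᵀ·[P·adj(𝓘𝓘_Ω)·𝓘_Ω·Δᵀ](γ(t))·γ'(t) = 0 for all t ∈ I (γ is an analytic solution of the equation of developable surfaces). -/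
open Matrix

/-- Key pointwise algebraic identity: the quadratic form of the principal-surfaces matrix
factors as `det Δ` times the quadratic form of the developable-surfaces matrix, given the
normality (symmetry) condition. -/
lemma key_identity_13 (D A B : Matrix (Fin 2) (Fin 2) ℝ) (v : Fin 2 → ℝ)
    (hs : (A * (Dᵀ).adjugate).IsSymm) :
    v ⬝ᵥ (D * !![(0:ℝ), 1; -1, 0] * (A.adjugate)ᵀ * D * B * Dᵀ).mulVec v
      = D.det * (v ⬝ᵥ (!![(0:ℝ), 1; -1, 0] * A.adjugate * B * Dᵀ).mulVec v) := by
  have hs01 := hs.apply 1 0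
  simp only [Matrix.mul_apply, Matrix.adjugate_fin_two, Matrix.transpose_apply,
    Fin.sum_univ_two, Matrix.of_apply, Matrix.cons_val_zero, Matrix.cons_val_one,
    Matrix.head_cons, Matrix.head_fin_const] at hs01
  simp only [Matrix.mulVec, dotProduct, Matrix.mul_apply, Matrix.adjugate_fin_two,
    Matrix.det_fin_two, Matrix.transpose_apply, Fin.sum_univ_two, Matrix.of_apply,
    Matrix.cons_val_zero, Matrix.cons_val_one, Matrix.head_cons, Matrix.head_fin_const]
  linear_combination (-(D 1 1)^2 * B 1 1 * (v 1)^2 - D 1 0 * D 1 1 * B 1 0 * (v 1)^2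
    - D 1 0 * D 1 1 * B 0 1 * (v 1)^2 - (D 1 0)^2 * B 0 0 * (v 1)^2
    - 2 * D 0 1 * D 1 1 * B 1 1 * (v 0) * (v 1) - D 0 1 * D 1 0 * B 1 0 * (v 0) * (v 1)
    - D 0 1 * D 1 0 * B 0 1 * (v 0) * (v 1) - (D 0 1)^2 * B 1 1 * (v 0)^2
    - D 0 0 * D 1 1 * B 1 0 * (v 0) * (v 1) - D 0 0 * D 1 1 * B 0 1 * (v 0) * (v 1)
    - 2 * D 0 0 * D 1 0 * B 0 0 * (v 0) * (v 1) - D 0 0 * D 0 1 * B 1 0 * (v 0)^2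
    - D 0 0 * D 0 1 * B 0 1 * (v 0)^2 - (D 0 0)^2 * B 0 0 * (v 0)^2) * hs01

/-- Entries of a product of matrix-valued functions with analytic entries are analytic. -/
lemma entry_mul_analytic {s : Set ℝ} {M N : ℝ → Matrix (Fin 2) (Fin 2) ℝ}
    (hM : ∀ i j, AnalyticOnNhd ℝ (fun t => M t i j) s)
    (hN : ∀ i j, AnalyticOnNhd ℝ (fun t => N t i j) s) :
    ∀ i j, AnalyticOnNhd ℝ (fun t => (M t * N t) i j) s := by
  intro i j
  simp only [Matrix.mul_apply, Fin.sum_univ_two]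
  exact ((hM i 0).mul (hN 0 j)).add ((hM i 1).mul (hN 1 j))

/-- Entries of the adjugate of a matrix-valued function with analytic entries are analytic. -/
lemma entry_adjugate_analytic {s : Set ℝ} {M : ℝ → Matrix (Fin 2) (Fin 2) ℝ}
    (hM : ∀ i j, AnalyticOnNhd ℝ (fun t => M t i j) s) :
    ∀ i j, AnalyticOnNhd ℝ (fun t => (M t).adjugate i j) s := by
  intro i j
  simp only [Matrix.adjugate_fin_two]
  fin_cases i <;> fin_cases j <;>
    simp only [Matrix.of_apply, Matrix.cons_val_zero, Matrix.cons_val_one, Matrix.head_cons,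
      Fin.isValue, Fin.zero_eta, Fin.mk_one, Matrix.cons_val', Matrix.empty_val',
      Matrix.cons_val_fin_one, Matrix.head_fin_const]
  · exact hM 1 1
  · exact (hM 0 1).neg
  · exact (hM 1 0).neg
  · exact hM 0 0

/-- for real-analytic normal congruence data, an analytic solution of the
equation of principal surfaces is either a branch of the singular set `{det Δ = 0}` or
an analytic solution of the equation of developable surfaces. -/
theorem stmt_13 (U : Set (ℝ × ℝ)) (hU : IsOpen U)
    (Δ IΩ IIΩ : ℝ × ℝ → Matrix (Fin 2) (Fin 2) ℝ)
    (hΔ : ∀ i j, AnalyticOnNhd ℝ (fun q => Δ q i j) U)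
    (hIΩ : ∀ i j, AnalyticOnNhd ℝ (fun q => IΩ q i j) U)
    (hIIΩ : ∀ i j, AnalyticOnNhd ℝ (fun q => IIΩ q i j) U)
    (hnormal : ∀ q ∈ U, (IIΩ q * ((Δ q)ᵀ).adjugate).IsSymm)
    (P : Matrix (Fin 2) (Fin 2) ℝ) (hP : P = !![0, 1; -1, 0])
    (I : Set ℝ) (hI : IsOpen I) (hIc : I.OrdConnected)
    (γ : ℝ → ℝ × ℝ) (hγ : AnalyticOnNhd ℝ γ I) (hmaps : Set.MapsTo γ I U)
    (hprin : ∀ t ∈ I, ![(deriv γ t).1, (deriv γ t).2] ⬝ᵥ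
        (Δ (γ t) * P * ((IIΩ (γ t)).adjugate)ᵀ * Δ (γ t) * IΩ (γ t) * (Δ (γ t))ᵀ).mulVec
          ![(deriv γ t).1, (deriv γ t).2] = 0) :
    (∀ t ∈ I, (Δ (γ t)).det = 0) ∨
    (∀ t ∈ I, ![(deriv γ t).1, (deriv γ t).2] ⬝ᵥ
        (P * (IIΩ (γ t)).adjugate * IΩ (γ t) * (Δ (γ t))ᵀ).mulVec
          ![(deriv γ t).1, (deriv γ t).2] = 0) := by
  subst hP
  -- the two scalar functions
  set f : ℝ → ℝ := fun t => (Δ (γ t)).det with hf_def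
  set g : ℝ → ℝ := fun t => ![(deriv γ t).1, (deriv γ t).2] ⬝ᵥ
      (!![(0:ℝ), 1; -1, 0] * (IIΩ (γ t)).adjugate * IΩ (γ t) * (Δ (γ t))ᵀ).mulVec
        ![(deriv γ t).1, (deriv γ t).2] with hg_def
  -- the factorization: f * g = 0 on I
  have hfg : ∀ t ∈ I, f t * g t = 0 := by
    intro t ht
    rw [← key_identity_13 (Δ (γ t)) (IIΩ (γ t)) (IΩ (γ t)) ![(deriv γ t).1, (deriv γ t).2]
      (hnormal (γ t) (hmaps ht))]
    exact hprin t ht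
  -- analyticity of composed matrix entries
  have hΔγ : ∀ i j, AnalyticOnNhd ℝ (fun t => Δ (γ t) i j) I := fun i j =>
    (hΔ i j).comp hγ hmaps
  have hIΩγ : ∀ i j, AnalyticOnNhd ℝ (fun t => IΩ (γ t) i j) I := fun i j =>
    (hIΩ i j).comp hγ hmaps
  have hIIΩγ : ∀ i j, AnalyticOnNhd ℝ (fun t => IIΩ (γ t) i j) I := fun i j =>
    (hIIΩ i j).comp hγ hmaps
  -- analyticity of f
  have hf : AnalyticOnNhd ℝ f I := by
    have : f = fun t => Δ (γ t) 0 0 * Δ (γ t) 1 1 - Δ (γ t) 0 1 * Δ (γ t) 1 0 := by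
      funext t; simp [hf_def, Matrix.det_fin_two]
    rw [this]
    exact ((hΔγ 0 0).mul (hΔγ 1 1)).sub ((hΔγ 0 1).mul (hΔγ 1 0))
  -- analyticity of the derivative components
  have hx : AnalyticOnNhd ℝ (fun t => (deriv γ t).1) I :=
    (analyticOnNhd_fst (𝕜 := ℝ) (t := Set.univ)).comp hγ.deriv (Set.mapsTo_univ _ _)
  have hy : AnalyticOnNhd ℝ (fun t => (deriv γ t).2) I :=
    (analyticOnNhd_snd (𝕜 := ℝ) (t := Set.univ)).comp hγ.deriv (Set.mapsTo_univ _ _)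
  -- analyticity of g
  have hg : AnalyticOnNhd ℝ g I := by
    have hPconst : ∀ i j, AnalyticOnNhd ℝ
        (fun _ : ℝ => (!![(0:ℝ), 1; -1, 0]) i j) I := fun i j => analyticOnNhd_const
    have hM : ∀ i j, AnalyticOnNhd ℝ
        (fun t => (!![(0:ℝ), 1; -1, 0] * (IIΩ (γ t)).adjugate * IΩ (γ t) * (Δ (γ t))ᵀ) i j)
          I := by
      have h1 := entry_mul_analytic hPconst (entry_adjugate_analytic hIIΩγ)
      have h2 := entry_mul_analytic h1 hIΩγ
      exact entry_mul_analytic h2 (fun i j => hΔγ j i)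
    have : g = fun t =>
        (deriv γ t).1 *
          ((!![(0:ℝ), 1; -1, 0] * (IIΩ (γ t)).adjugate * IΩ (γ t) * (Δ (γ t))ᵀ) 0 0
              * (deriv γ t).1 +
            (!![(0:ℝ), 1; -1, 0] * (IIΩ (γ t)).adjugate * IΩ (γ t) * (Δ (γ t))ᵀ) 0 1
              * (deriv γ t).2) +
        (deriv γ t).2 *
          ((!![(0:ℝ), 1; -1, 0] * (IIΩ (γ t)).adjugate * IΩ (γ t) * (Δ (γ t))ᵀ) 1 0
              * (deriv γ t).1 +
            (!![(0:ℝ), 1; -1, 0] * (IIΩ (γ t)).adjugate * IΩ (γ t) * (Δ (γ t))ᵀ) 1 1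
              * (deriv γ t).2) := by
      funext t
      simp [hg_def, Matrix.mulVec, dotProduct, Fin.sum_univ_two]
    rw [this]
    exact (hx.mul (((hM 0 0).mul hx).add ((hM 0 1).mul hy))).add
      (hy.mul (((hM 1 0).mul hx).add ((hM 1 1).mul hy)))
  -- now the zero-product argument
  by_cases hfz : ∀ t ∈ I, f t = 0
  · exact Or.inl hfz
  · right
    push_neg at hfz
    obtain ⟨t₀, ht₀, hft₀⟩ := hfz
    have hpre : IsPreconnected I := hIc.isPreconnected
    intro t ht
    -- f is not eventually zero near t
    have hne : ¬ (∀ᶠ s in nhds t, f s = 0) := by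
      intro hev
      have := hf.eqOn_zero_of_preconnected_of_eventuallyEq_zero hpre ht hev
      exact hft₀ (this ht₀)
    have halt := (hf t ht).eventually_eq_zero_or_eventually_ne_zero
    have hne' : ∀ᶠ s in nhdsWithin t {t}ᶜ, f s ≠ 0 := by
      rcases halt with h | h
      · exact absurd h hne
      · exact h
    -- near t within the punctured neighborhood, g = 0
    have hIin : ∀ᶠ s in nhdsWithin t {t}ᶜ, s ∈ I :=
      eventually_nhdsWithin_of_eventually_nhds (hI.mem_nhds ht)
    have hg0 : ∀ᶠ s in nhdsWithin t {t}ᶜ, g s = 0 := by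
      filter_upwards [hne', hIin] with s hfs hsI
      have := hfg s hsI
      rcases mul_eq_zero.mp this with h | h
      · exact absurd h hfs
      · exact h
    -- g is continuous at t, and the punctured neighborhood filter is nontrivial
    have hgc : ContinuousAt g t := (hg t ht).continuousAt
    have : Filter.Tendsto g (nhdsWithin t {t}ᶜ) (nhds (g t)) :=
      hgc.continuousWithinAt.tendsto
    have hlim : Filter.Tendsto g (nhdsWithin t {t}ᶜ) (nhds 0) :=
      Filter.Tendsto.congr' (Filter.EventuallyEq.symm (by

        filter_upwards [hg0] with s hs; simp [hs])) tendsto_const_nhds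
    exact tendsto_nhds_unique this hlim
end

section
/- For all real 2×2 matrices Λ and Δ and every v ∈ ℝ²∖{0}: v is an eigenvector of Δᵀ·adj(Λᵀ) if and only if v is an eigenvector of Λᵀ·adj(Δᵀ), where adj denotes the adjugate. -/
open Matrix

lemma key (A B : Matrix (Fin 2) (Fin 2) ℝ) :
    A * B.adjugate + B * A.adjugate =
      ((A + B).det - A.det - B.det) • (1 : Matrix (Fin 2) (Fin 2) ℝ) := by
  ext i j
  fin_cases i <;> fin_cases j <;>
    simp [adjugate_fin_two, Matrix.mul_apply, Fin.sum_univ_two, det_fin_two,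
      Matrix.one_apply, Matrix.smul_apply] <;> ring

lemma half (A B : Matrix (Fin 2) (Fin 2) ℝ) (v : Fin 2 → ℝ)
    (h : ∃ c : ℝ, (A * B.adjugate).mulVec v = c • v) :
    ∃ c : ℝ, (B * A.adjugate).mulVec v = c • v := by
  obtain ⟨c, hc⟩ := h
  set s := (A + B).det - A.det - B.det with hs
  refine ⟨s - c, ?_⟩
  have hsum := key A B
  have : (B * A.adjugate) = s • 1 - A * B.adjugate := by
    rw [← hsum]; abel
  rw [this, Matrix.sub_mulVec, Matrix.smul_mulVec, Matrix.one_mulVec, hc,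
    sub_smul, hs, sub_smul, sub_smul]
  module

/-- a nonzero `v` is an eigenvector of `Δᵀ·adj(Λᵀ)` iff it is an
eigenvector of `Λᵀ·adj(Δᵀ)`. -/
theorem stmt_14 (Λ Δ : Matrix (Fin 2) (Fin 2) ℝ) (v : Fin 2 → ℝ) (hv : v ≠ 0) :
    (∃ c : ℝ, (Δᵀ * (Λᵀ).adjugate).mulVec v = c • v) ↔
    (∃ c : ℝ, (Λᵀ * (Δᵀ).adjugate).mulVec v = c • v) := by
  exact ⟨half _ _ v, half _ _ v⟩
end

section
/- Let 𝐈, Λ, μ be real 2×2 matrices with 𝐈 symmetric, and suppose μ·𝐈·Λᵀ is symmetric. Set 𝓘𝓘_Ω := −𝐈·Λᵀ, K := det(μ), α := μ·adj(Λ), and P = [[0,1],[−1,0]]. Then μ·P·adj(𝓘𝓘_Ω)ᵀ·μ·𝐈·μᵀ = −K·det(𝐈)·P·αᵀ. -/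
open Matrix

private lemma padj (A : Matrix (Fin 2) (Fin 2) ℝ) :
    !![(0:ℝ), 1; -1, 0] * A.adjugate = Aᵀ * !![(0:ℝ), 1; -1, 0] := by
  rw [Matrix.adjugate_fin_two]
  ext i j
  fin_cases i <;> fin_cases j <;>
    simp [Matrix.mul_apply, Fin.sum_univ_two, Matrix.transpose_apply]

private lemma adjadj (A : Matrix (Fin 2) (Fin 2) ℝ) :
    A.adjugate.adjugate = A := by
  rw [Matrix.adjugate_fin_two, Matrix.adjugate_fin_two]
  ext i j
  fin_cases i <;> fin_cases j <;> simp

private lemma pmul (A : Matrix (Fin 2) (Fin 2) ℝ) :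
    !![(0:ℝ), 1; -1, 0] * A = (A.adjugate)ᵀ * !![(0:ℝ), 1; -1, 0] := by
  have := padj A.adjugate
  rwa [adjadj] at this

private lemma adjneg (A : Matrix (Fin 2) (Fin 2) ℝ) :
    (-A).adjugate = -(A.adjugate) := by
  rw [Matrix.adjugate_fin_two, Matrix.adjugate_fin_two]
  ext i j
  fin_cases i <;> fin_cases j <;> simp

/-- with `𝐈` symmetric and `μ·𝐈·Λᵀ` symmetric (normality),
`𝓘𝓘_Ω := −𝐈·Λᵀ`, `K := det μ`, `α := μ·adj(Λ)`, one has
`μ·P·adj(𝓘𝓘_Ω)ᵀ·μ·𝐈·μᵀ = −K·det(𝐈)·P·αᵀ`. -/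
theorem stmt_16 (Im Λ μ : Matrix (Fin 2) (Fin 2) ℝ) (hIm : Im.IsSymm)
    (hsym : (μ * Im * Λᵀ).IsSymm)
    (IIΩ : Matrix (Fin 2) (Fin 2) ℝ) (hIIΩ : IIΩ = -(Im * Λᵀ))
    (K : ℝ) (hK : K = μ.det)
    (α : Matrix (Fin 2) (Fin 2) ℝ) (hα : α = μ * Λ.adjugate)
    (P : Matrix (Fin 2) (Fin 2) ℝ) (hP : P = !![0, 1; -1, 0]) :
    μ * P * (IIΩ.adjugate)ᵀ * μ * Im * μᵀ = -((K * Im.det) • (P * αᵀ)) := by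
  subst hIIΩ hK hα hP
  have hIm' : Imᵀ = Im := hIm
  have hs : Λ * Im * μᵀ = μ * Im * Λᵀ := by
    have := hsym.eq
    rwa [Matrix.transpose_mul, Matrix.transpose_mul, Matrix.transpose_transpose,
      hIm', ← Matrix.mul_assoc] at this
  -- Rewrite the adjugate of IIΩ
  have h1 : ((-(Im * Λᵀ)).adjugate)ᵀ = -(Im.adjugate * Λ.adjugate) := by
    rw [adjneg, Matrix.adjugate_mul_distrib, Matrix.transpose_neg, Matrix.transpose_mul,
      Matrix.adjugate_transpose Im, hIm', ← Matrix.adjugate_transpose Λ,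
      Matrix.transpose_transpose]
  rw [h1]
  have key : ∀ X : Matrix (Fin 2) (Fin 2) ℝ,
      !![(0:ℝ),1;-1,0] * (Im.adjugate * (Λ.adjugate * X))
        = Im * (Λᵀ * (!![(0:ℝ),1;-1,0] * X)) := by
    intro X
    simp only [← Matrix.mul_assoc]
    rw [padj Im, hIm', Matrix.mul_assoc Im, padj Λ]
    simp only [Matrix.mul_assoc]
  -- LHS = -(μ * Im * Λᵀ * (P * μ * Im * μᵀ))
  have h2 : μ * !![(0:ℝ),1;-1,0] * -(Im.adjugate * Λ.adjugate) * μ * Im * μᵀ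
      = -(μ * Im * Λᵀ * (!![(0:ℝ),1;-1,0] * μ * Im * μᵀ)) := by
    simp only [Matrix.mul_neg, Matrix.neg_mul, neg_inj, Matrix.mul_assoc]
    rw [key (μ * (Im * μᵀ))]
  rw [h2, ← hs]
  -- P * μ * Im * μᵀ = adj(μ)ᵀ * adj(Im) * adj(μ) * P
  have h3 : !![(0:ℝ),1;-1,0] * μ * Im * μᵀ
      = (μ.adjugate)ᵀ * Im.adjugate * μ.adjugate * !![(0:ℝ),1;-1,0] := by
    rw [pmul μ, Matrix.mul_assoc _ _ Im, pmul Im, Matrix.adjugate_transpose Im, hIm',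
      ← Matrix.mul_assoc, Matrix.mul_assoc _ _ μᵀ, pmul μᵀ, ← Matrix.adjugate_transpose μ,
      Matrix.transpose_transpose, ← Matrix.mul_assoc]
  rw [h3]
  have e1 : μᵀ * (μ.adjugate)ᵀ = μ.det • (1 : Matrix (Fin 2) (Fin 2) ℝ) := by
    rw [← Matrix.transpose_mul, Matrix.adjugate_mul]
    simp [Matrix.transpose_smul]
  have h4 : Λ * Im * μᵀ * ((μ.adjugate)ᵀ * Im.adjugate * μ.adjugate * !![(0:ℝ),1;-1,0])
      = (μ.det * Im.det) • (Λ * μ.adjugate * !![(0:ℝ),1;-1,0]) := by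
    calc Λ * Im * μᵀ * ((μ.adjugate)ᵀ * Im.adjugate * μ.adjugate * !![(0:ℝ),1;-1,0])
        = Λ * ((Im * (μᵀ * (μ.adjugate)ᵀ)) * Im.adjugate) * (μ.adjugate * !![(0:ℝ),1;-1,0]) := by
          simp only [Matrix.mul_assoc]
      _ = (μ.det * Im.det) • (Λ * μ.adjugate * !![(0:ℝ),1;-1,0]) := by
          rw [e1]
          simp only [Matrix.mul_smul, Matrix.smul_mul, Matrix.mul_one, Matrix.one_mul,
            Matrix.mul_adjugate, smul_smul, Matrix.mul_assoc]
  rw [h4]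
  have h5 : !![(0:ℝ),1;-1,0] * (μ * Λ.adjugate)ᵀ
      = Λ * μ.adjugate * !![(0:ℝ),1;-1,0] := by
    rw [Matrix.transpose_mul, Matrix.adjugate_transpose Λ, ← Matrix.mul_assoc, padj Λᵀ,
      Matrix.transpose_transpose, Matrix.mul_assoc, pmul μᵀ, ← Matrix.adjugate_transpose μ,
      Matrix.transpose_transpose, ← Matrix.mul_assoc]
  rw [h5]
end

section
/- Let U ⊆ ℝ² be open, and let Λ, μ, 𝐈 : U → M₂(ℝ) be smooth maps with 𝐈(q) symmetric positive definite and μ(q)·𝐈(q)·Λ(q)ᵀ symmetric for all q ∈ U. Assume {q ∈ U : det Λ(q) = 0} = {q ∈ U : det μ(q) = 0}. Let γ : I → U be a smooth curve and P = [[0,1],[−1,0]]. Then γ'(t)ᵀ·[μ·P·adj(−𝐈·Λᵀ)ᵀ·μ·𝐈·μᵀ](γ(t))·γ'(t) = 0 for all t ∈ I (γ is a Kummer principal line of the congruence) if and only if det(Λ(γ(t))) · γ'(t)ᵀ·[P·(μ·adj(Λ))ᵀ](γ(t))·γ'(t) = 0 for all t ∈ I (γ is a line of curvature of x). -/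
open Matrix

private lemma transpose_fin2 (a b c d : ℝ) : (!![a, b; c, d])ᵀ = !![a, c; b, d] := by
  ext i j; fin_cases i <;> fin_cases j <;> simp

private lemma neg_fin2 (a b c d : ℝ) : -(!![a, b; c, d]) = !![-a, -b; -c, -d] := by
  ext i j; fin_cases i <;> fin_cases j <;> simp

private lemma quad_fin2 (a b c d v1 v2 : ℝ) :
    ![v1, v2] ⬝ᵥ (!![a, b; c, d]).mulVec ![v1, v2]
      = v1 * (a * v1 + b * v2) + v2 * (c * v1 + d * v2) := by
  simp [Matrix.mulVec, dotProduct, Fin.sum_univ_succ]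

private lemma key_scalar (a1 a2 a3 a4 b1 b2 b3 b4 g1 g2 g3 g4 v1 v2 : ℝ)
    (hS : a4*b2*g4 + a4*b1*g2 + a3*b2*g3 + a3*b1*g1
        = a2*b4*g4 + a2*b3*g2 + a1*b4*g3 + a1*b3*g1) :
    ![v1, v2] ⬝ᵥ
      (!![b1, b2; b3, b4] * !![(0:ℝ), 1; -1, 0] *
        (((-(!![g1, g2; g3, g4] * (!![a1, a2; a3, a4])ᵀ)).adjugate)ᵀ) *
        !![b1, b2; b3, b4] * !![g1, g2; g3, g4] * (!![b1, b2; b3, b4])ᵀ).mulVec ![v1, v2]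
      = -((!![b1, b2; b3, b4]).det * (!![g1, g2; g3, g4]).det) *
          (![v1, v2] ⬝ᵥ (!![(0:ℝ), 1; -1, 0] *
            (!![b1, b2; b3, b4] * (!![a1, a2; a3, a4]).adjugate)ᵀ).mulVec ![v1, v2]) := by
  simp only [transpose_fin2, Matrix.mul_fin_two, neg_fin2, Matrix.adjugate_fin_two_of,
    Matrix.det_fin_two_of, quad_fin2]
  linear_combination
    ((b1*v1 + b3*v2) * (g1*(b1*v1 + b3*v2) + g2*(b2*v1 + b4*v2)) +
      (b2*v1 + b4*v2) * (g3*(b1*v1 + b3*v2) + g4*(b2*v1 + b4*v2))) * hS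

private lemma key_mat (A B G : Matrix (Fin 2) (Fin 2) ℝ)
    (hS : (B * G * Aᵀ) 0 1 = (B * G * Aᵀ) 1 0) (v1 v2 : ℝ) :
    ![v1, v2] ⬝ᵥ
      (B * !![(0:ℝ), 1; -1, 0] * (((-(G * Aᵀ)).adjugate)ᵀ) * B * G * Bᵀ).mulVec ![v1, v2]
      = -(B.det * G.det) *
          (![v1, v2] ⬝ᵥ (!![(0:ℝ), 1; -1, 0] * (B * A.adjugate)ᵀ).mulVec ![v1, v2]) := by
  rw [Matrix.eta_fin_two A, Matrix.eta_fin_two B, Matrix.eta_fin_two G]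
  apply key_scalar
  simp only [Matrix.mul_apply, Matrix.transpose_apply, Fin.sum_univ_succ,
    Fin.sum_univ_zero, add_zero, Fin.succ_zero_eq_one, Fin.isValue] at hS
  linear_combination hS

/-- for an exact normal congruence given by a frontal `x` (data `Λ, μ, 𝐈`)
whose singular set coincides with that of its unit normal (`{det Λ = 0} = {det μ = 0}`),
a curve is a Kummer principal line iff it is a line of curvature of `x`. -/
theorem stmt_17 (U : Set (ℝ × ℝ)) (hU : IsOpen U)
    (Λ μ Im : ℝ × ℝ → Matrix (Fin 2) (Fin 2) ℝ)
    (hΛsmooth : ∀ i j, ContDiffOn ℝ (⊤ : ℕ∞) (fun q => Λ q i j) U)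
    (hμsmooth : ∀ i j, ContDiffOn ℝ (⊤ : ℕ∞) (fun q => μ q i j) U)
    (hImsmooth : ∀ i j, ContDiffOn ℝ (⊤ : ℕ∞) (fun q => Im q i j) U)
    (hpos : ∀ q ∈ U, (Im q).PosDef)
    (hsym : ∀ q ∈ U, (μ q * Im q * (Λ q)ᵀ).IsSymm)
    (hsing : {q ∈ U | (Λ q).det = 0} = {q ∈ U | (μ q).det = 0})
    (P : Matrix (Fin 2) (Fin 2) ℝ) (hP : P = !![0, 1; -1, 0])
    (I : Set ℝ) (γ : ℝ → ℝ × ℝ) (hγ : ContDiffOn ℝ (⊤ : ℕ∞) γ I)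
    (hmaps : Set.MapsTo γ I U) :
    (∀ t ∈ I, ![(deriv γ t).1, (deriv γ t).2] ⬝ᵥ
        (μ (γ t) * P * (((-(Im (γ t) * (Λ (γ t))ᵀ)).adjugate)ᵀ) * μ (γ t) * Im (γ t) *
          (μ (γ t))ᵀ).mulVec ![(deriv γ t).1, (deriv γ t).2] = 0) ↔
    (∀ t ∈ I, (Λ (γ t)).det *
        (![(deriv γ t).1, (deriv γ t).2] ⬝ᵥ
          (P * (μ (γ t) * (Λ (γ t)).adjugate)ᵀ).mulVec
            ![(deriv γ t).1, (deriv γ t).2]) = 0) := by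
  subst hP
  have pt : ∀ t ∈ I,
      (![(deriv γ t).1, (deriv γ t).2] ⬝ᵥ
        (μ (γ t) * !![(0:ℝ), 1; -1, 0] * (((-(Im (γ t) * (Λ (γ t))ᵀ)).adjugate)ᵀ) *
          μ (γ t) * Im (γ t) *
          (μ (γ t))ᵀ).mulVec ![(deriv γ t).1, (deriv γ t).2] = 0) ↔
      ((Λ (γ t)).det *
        (![(deriv γ t).1, (deriv γ t).2] ⬝ᵥ
          (!![(0:ℝ), 1; -1, 0] * (μ (γ t) * (Λ (γ t)).adjugate)ᵀ).mulVec
            ![(deriv γ t).1, (deriv γ t).2]) = 0) := by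
    intro t ht
    have hq : γ t ∈ U := hmaps ht
    have hSsymm := hsym (γ t) hq
    have hS : (μ (γ t) * Im (γ t) * (Λ (γ t))ᵀ) 0 1
        = (μ (γ t) * Im (γ t) * (Λ (γ t))ᵀ) 1 0 := by
      have := congrFun (congrFun hSsymm.eq 1) 0
      simpa using this
    have hkey := key_mat (Λ (γ t)) (μ (γ t)) (Im (γ t)) hS
      (deriv γ t).1 (deriv γ t).2
    rw [hkey]
    have hdG : (Im (γ t)).det > 0 := (hpos (γ t) hq).det_pos
    have hdet_iff : ((Λ (γ t)).det = 0) ↔ ((μ (γ t)).det = 0) := by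
      have h := Set.ext_iff.mp hsing (γ t)
      simp only [Set.mem_setOf_eq] at h
      constructor
      · intro h0; exact (h.mp ⟨hq, h0⟩).2
      · intro h0; exact (h.mpr ⟨hq, h0⟩).2
    set dA := (Λ (γ t)).det
    set dB := (μ (γ t)).det
    set dG := (Im (γ t)).det
    set Q := ![(deriv γ t).1, (deriv γ t).2] ⬝ᵥ
      (!![(0:ℝ), 1; -1, 0] * (μ (γ t) * (Λ (γ t)).adjugate)ᵀ).mulVec
        ![(deriv γ t).1, (deriv γ t).2]
    constructor
    · intro h
      rcases mul_eq_zero.mp h with h' | h'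
      · have hBG : dB * dG = 0 := by linarith [neg_eq_zero.mp h']
        rcases mul_eq_zero.mp hBG with h'' | h''
        · rw [hdet_iff.mpr h'']; ring
        · exact absurd h'' (ne_of_gt hdG)
      · rw [h']; ring
    · intro h
      rcases mul_eq_zero.mp h with h' | h'
      · rw [hdet_iff.mp h']; ring
      · rw [h', mul_zero]
  constructor
  · intro h t ht; exact (pt t ht).mp (h t ht)
  · intro h t ht; exact (pt t ht).mpr (h t ht)
end
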